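/- arXiv:2110.07951 — 3 statements merged into one kernel-verified Lean document; each statement's English description precedes it below -/
import Mathlib

section
/- When Ra = 0, all roots of the characteristic cubic a₃β³ + a₂β² + a₁β + a₀ = 0 have negative real parts; in fact the roots are β = −r²/Pr and β = −(Qk²α₂²/r²) − r² ± i·√Ta·(lπ/r). -/
open Real

/-- When `Ra = 0` the roots of the characteristic cubic are exactly
`−r²/Pr` and `−(Qk²α₂²/r²) − r² ± i√Ta·(lπ/r)`, and all have negative real parts. -/
theorem stmt3 (Pr Q Ta α₁ α₂ : ℝ) (j k : ℤ) (l : ℕ)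
    (hPr : 0 < Pr) (hQ : 0 < Q) (hTa : 0 < Ta)
    (hα₁ : 0 < α₁) (hα₂ : 0 < α₂) (hjk : (j, k) ≠ (0, 0)) (hl : 0 < l) :
    let α2 : ℝ := ((j : ℝ) * α₁) ^ 2 + ((k : ℝ) * α₂) ^ 2
    let r2 : ℝ := α2 + (l : ℝ) ^ 2 * π ^ 2
    let a₀ : ℝ := r2 * (r2 ^ 2 + Q * (k : ℝ) ^ 2 * α₂ ^ 2) ^ 2
      + r2 ^ 2 * (l : ℝ) ^ 2 * π ^ 2 * Ta
    let a₁ : ℝ := (r2 ^ 2 + Q * (k : ℝ) ^ 2 * α₂ ^ 2)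
        * (Pr * Q * (k : ℝ) ^ 2 * α₂ ^ 2 + r2 ^ 2 * (Pr + 2))
      + Pr * Ta * (l : ℝ) ^ 2 * π ^ 2 * r2
    let a₂' : ℝ := (r2 ^ 2 + 2 * Pr * (r2 ^ 2 + Q * (k : ℝ) ^ 2 * α₂ ^ 2)) * r2
    let a₃ : ℝ := Pr * r2 ^ 2
    let β₁ : ℂ := ((-(r2 / Pr) : ℝ) : ℂ)
    let β₂ : ℂ := ((-(Q * (k : ℝ) ^ 2 * α₂ ^ 2 / r2) - r2 : ℝ) : ℂ)
      + Complex.I * ((Real.sqrt Ta * ((l : ℝ) * π / Real.sqrt r2) : ℝ) : ℂ)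
    let β₃ : ℂ := ((-(Q * (k : ℝ) ^ 2 * α₂ ^ 2 / r2) - r2 : ℝ) : ℂ)
      - Complex.I * ((Real.sqrt Ta * ((l : ℝ) * π / Real.sqrt r2) : ℝ) : ℂ)
    (∀ β : ℂ, (a₃ : ℂ) * β ^ 3 + (a₂' : ℂ) * β ^ 2 + (a₁ : ℂ) * β + (a₀ : ℂ) = 0 ↔
      (β = β₁ ∨ β = β₂ ∨ β = β₃)) ∧
    (∀ β : ℂ, (a₃ : ℂ) * β ^ 3 + (a₂' : ℂ) * β ^ 2 + (a₁ : ℂ) * β + (a₀ : ℂ) = 0 →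
      β.re < 0) := by
  intro α2 r2 a₀ a₁ a₂' a₃ β₁ β₂ β₃
  have hπ := Real.pi_pos
  have hr2 : 0 < r2 := by
    show 0 < ((j : ℝ) * α₁) ^ 2 + ((k : ℝ) * α₂) ^ 2 + (l : ℝ) ^ 2 * π ^ 2
    have h1 : 0 < (l : ℝ) ^ 2 * π ^ 2 := by positivity
    positivity
  have hq : 0 ≤ Q * (k : ℝ) ^ 2 * α₂ ^ 2 := by positivity
  have hr2' : (r2 : ℂ) ≠ 0 := by exact_mod_cast hr2.ne'
  have hPr' : (Pr : ℂ) ≠ 0 := by exact_mod_cast hPr.ne'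
  -- square of the imaginary part
  have hYr : (Real.sqrt Ta * ((l : ℝ) * π / Real.sqrt r2)) ^ 2
      = Ta * ((l : ℝ) ^ 2 * π ^ 2) / r2 := by
    rw [mul_pow, div_pow, mul_pow, Real.sq_sqrt hTa.le, Real.sq_sqrt hr2.le]
    ring
  have hY : ((Real.sqrt Ta * ((l : ℝ) * π / Real.sqrt r2) : ℝ) : ℂ) ^ 2
      = ((Ta : ℂ) * ((l : ℂ) ^ 2 * (π : ℂ) ^ 2)) / (r2 : ℂ) := by
    rw [← Complex.ofReal_pow, hYr]
    push_cast
    ring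
  clear_value α2 r2
  -- the key factorization
  have key : ∀ β : ℂ, (a₃ : ℂ) * β ^ 3 + (a₂' : ℂ) * β ^ 2 + (a₁ : ℂ) * β + (a₀ : ℂ)
      = ((Pr : ℂ) * (r2 : ℂ) ^ 2) * ((β - β₁) * ((β - β₂) * (β - β₃))) := by
    intro β
    have h23 : (β - β₂) * (β - β₃)
        = (β - ((-(Q * (k : ℝ) ^ 2 * α₂ ^ 2 / r2) - r2 : ℝ) : ℂ)) ^ 2
          + ((Ta : ℂ) * ((l : ℂ) ^ 2 * (π : ℂ) ^ 2)) / (r2 : ℂ) := by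
      rw [← hY]
      simp only [β₂, β₃]
      ring_nf
      rw [Complex.I_sq]
      ring
    rw [h23]
    simp only [a₀, a₁, a₂', a₃, β₁]
    push_cast
    field_simp
    ring
  have hA : ((Pr : ℂ) * (r2 : ℂ) ^ 2) ≠ 0 := by
    exact mul_ne_zero hPr' (pow_ne_zero _ hr2')
  have hiff : ∀ β : ℂ, (a₃ : ℂ) * β ^ 3 + (a₂' : ℂ) * β ^ 2 + (a₁ : ℂ) * β + (a₀ : ℂ) = 0 ↔
      (β = β₁ ∨ β = β₂ ∨ β = β₃) := by
    intro β
    rw [key β]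
    simp only [mul_eq_zero, sub_eq_zero, hPr', hr2', pow_eq_zero_iff, false_or,
      OfNat.ofNat_ne_zero, ne_eq, not_false_eq_true]
  refine ⟨hiff, ?_⟩
  intro β hβ
  have hre : -(Q * (k : ℝ) ^ 2 * α₂ ^ 2 / r2) - r2 < 0 := by
    have h0 : 0 ≤ Q * (k : ℝ) ^ 2 * α₂ ^ 2 / r2 := div_nonneg hq hr2.le
    linarith
  have hre1 : -(r2 / Pr) < 0 := by
    have : 0 < r2 / Pr := div_pos hr2 hPr
    linarith
  rcases (hiff β).1 hβ with h | h | h <;> subst h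
  · simpa only [β₁, Complex.ofReal_re] using hre1
  · have : β₂.re = -(Q * (k : ℝ) ^ 2 * α₂ ^ 2 / r2) - r2 := by
      simp only [β₂, Complex.add_re, Complex.mul_re, Complex.I_re, Complex.I_im,
        Complex.ofReal_re, Complex.ofReal_im, zero_mul, mul_zero, one_mul, sub_zero,
        zero_sub, add_zero, neg_zero]
    rw [this]; exact hre
  · have : β₃.re = -(Q * (k : ℝ) ^ 2 * α₂ ^ 2 / r2) - r2 := by
      simp only [β₃, Complex.sub_re, Complex.mul_re, Complex.I_re, Complex.I_im,
        Complex.ofReal_re, Complex.ofReal_im, zero_mul, mul_zero, one_mul, sub_zero,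
        zero_sub, add_zero, neg_zero, sub_neg_eq_add]
    rw [this]; exact hre
end

section
/- Suppose β(Ra) = σ(Ra) + iρ(Ra) is a root of the real cubic a₃β³ + a₂β² + a₁β + a₀ = 0 whose coefficients a₁, a₀ depend affinely on Ra (with a₂, a₃ constant in Ra), and at Ra = Ra_c we have σ(Ra_c) = 0 and ρ(Ra_c) ≠ 0. Then differentiating the equation in Ra at Ra_c yields σ'(Ra_c) = (a₁a₀' − a₀a₁') / (2a₂²ρ² + 2a₁²); in particular σ'(Ra_c) > 0 if and only if a₁a₀' − a₀a₁' > 0. -/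
/-!
Differentiating the root equation along the branch gives
`(3a₃β² + 2a₂β + a₁) β' + a₁' β + a₀' = 0`. At `β = iρ` the real and imaginary parts of the
cubic force `a₀ = a₂ρ²` and `a₁ = a₃ρ²`, so the coefficient of `β'` is `2(ia₂ρ - a₁)`;
multiplying by its conjugate and taking real parts gives
`σ' (2a₂²ρ² + 2a₁²) = a₁a₀' - a₀a₁'`, and the factor on the left is positive.
-/

open Complex Filter Topology

theorem cubic_root_hasDerivAt_eq_zero {𝕜 𝔸 : Type*} [NontriviallyNormedField 𝕜]
    [NormedCommRing 𝔸] [NormedAlgebra 𝕜 𝔸] {c₃ c₂ : 𝔸} {c₁ c₀ β : 𝕜 → 𝔸} {c₁' c₀' β' : 𝔸}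
    {x : 𝕜} (hc₁ : HasDerivAt c₁ c₁' x) (hc₀ : HasDerivAt c₀ c₀' x) (hβ : HasDerivAt β β' x)
    (hroot : ∀ᶠ t in 𝓝 x, c₃ * β t ^ 3 + c₂ * β t ^ 2 + c₁ t * β t + c₀ t = 0) :
    (3 * c₃ * β x ^ 2 + 2 * c₂ * β x + c₁ x) * β' + c₁' * β x + c₀' = 0 := by
  have hderiv := ((((hβ.fun_pow 3).const_mul c₃).add ((hβ.fun_pow 2).const_mul c₂)).add
    (hc₁.mul hβ)).add hc₀
  have hzero := (hasDerivAt_const x (0 : 𝔸)).congr_of_eventuallyEq hroot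
  linear_combination hderiv.unique hzero

theorem ofReal_add_ofReal_mul_I_eq_zero {x y : ℝ} (h : (x : ℂ) + y * I = 0) : x = 0 ∧ y = 0 := by
  simpa [Complex.ext_iff] using h

theorem cubic_purely_imaginary_root {a₃ a₂ a₁ a₀ r : ℝ} (hr : r ≠ 0)
    (h : (a₃ : ℂ) * (r * I) ^ 3 + a₂ * (r * I) ^ 2 + a₁ * (r * I) + a₀ = 0) :
    a₀ = a₂ * r ^ 2 ∧ a₁ = a₃ * r ^ 2 := by
  have hsplit : ((a₀ - a₂ * r ^ 2 : ℝ) : ℂ) + ((a₁ - a₃ * r ^ 2) * r : ℝ) * I = 0 := by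
    push_cast
    linear_combination h - (a₂ * r ^ 2 + a₃ * r ^ 3 * I) * I_sq
  obtain ⟨hre, him⟩ := ofReal_add_ofReal_mul_I_eq_zero hsplit
  exact ⟨by linarith, by linarith [(mul_eq_zero.1 him).resolve_right hr]⟩

theorem stmt6_general (a₂ a₃ : ℝ) (a₁ a₀ σ ρ : ℝ → ℝ) (a₁' a₀' σ' ρ' Rac : ℝ)
    (h₂ : 0 < a₂)
    (ha₁ : HasDerivAt a₁ a₁' Rac) (ha₀ : HasDerivAt a₀ a₀' Rac)
    (hσ : HasDerivAt σ σ' Rac) (hρ : HasDerivAt ρ ρ' Rac)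
    (hroot : ∀ Ra : ℝ,
      (a₃ : ℂ) * ((σ Ra : ℂ) + (ρ Ra : ℂ) * Complex.I) ^ 3
        + (a₂ : ℂ) * ((σ Ra : ℂ) + (ρ Ra : ℂ) * Complex.I) ^ 2
        + (a₁ Ra : ℂ) * ((σ Ra : ℂ) + (ρ Ra : ℂ) * Complex.I) + (a₀ Ra : ℂ) = 0)
    (hσc : σ Rac = 0) (hρc : ρ Rac ≠ 0) :
    σ' = (a₁ Rac * a₀' - a₀ Rac * a₁') / (2 * a₂ ^ 2 * (ρ Rac) ^ 2 + 2 * (a₁ Rac) ^ 2) ∧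
    (0 < σ' ↔ 0 < a₁ Rac * a₀' - a₀ Rac * a₁') := by
  have hβ : HasDerivAt (fun Ra ↦ (σ Ra : ℂ) + ρ Ra * I) (σ' + ρ' * I) Rac :=
    hσ.ofReal_comp.add (hρ.ofReal_comp.mul_const I)
  have hderiv := cubic_root_hasDerivAt_eq_zero ha₁.ofReal_comp ha₀.ofReal_comp hβ
    (Eventually.of_forall hroot)
  have hβc : (σ Rac : ℂ) + ρ Rac * I = ρ Rac * I := by simp [hσc]
  rw [hβc] at hderiv
  obtain ⟨h₀, h₁⟩ := cubic_purely_imaginary_root hρc (hβc ▸ hroot Rac)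
  set r := ρ Rac
  have hsplit : ((-3 * a₃ * r ^ 2 * σ' - 2 * a₂ * r * ρ' + a₁ Rac * σ' + a₀' : ℝ) : ℂ) +
      ((2 * a₂ * r * σ' - 3 * a₃ * r ^ 2 * ρ' + a₁ Rac * ρ' + a₁' * r : ℝ) : ℂ) * I = 0 := by
    push_cast
    linear_combination hderiv - (3 * a₃ * r ^ 2 * (σ' + ρ' * I) + 2 * a₂ * r * ρ') * I_sq
  obtain ⟨hre, him⟩ := ofReal_add_ofReal_mul_I_eq_zero hsplit
  have hD : 0 < 2 * a₂ ^ 2 * r ^ 2 + 2 * a₁ Rac ^ 2 := by positivity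
  have key : σ' * (2 * a₂ ^ 2 * r ^ 2 + 2 * a₁ Rac ^ 2) = a₁ Rac * a₀' - a₀ Rac * a₁' := by
    linear_combination (-(a₁ Rac)) * hre + (a₂ * r) * him
      + (3 * a₁ Rac * σ' - 3 * a₂ * r * ρ') * h₁ + a₁' * h₀
  have hσ' := eq_div_of_mul_eq hD.ne' key
  exact ⟨hσ', by rw [hσ', div_pos_iff_of_pos_right hD]⟩

/-- For a differentiable branch `β(Ra) = σ(Ra) + iρ(Ra)` of roots of the cubic whose
coefficients `a₁, a₀` depend on `Ra`, if at `Ra_c` the root is purely imaginary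
(`σ = 0`, `ρ ≠ 0`, with `a₁a₂ = a₀a₃`), then
`σ'(Ra_c) = (a₁a₀' − a₀a₁')/(2a₂²ρ² + 2a₁²)`, so `σ'(Ra_c) > 0 ↔ a₁a₀' − a₀a₁' > 0`. -/
theorem stmt6 (a₂ a₃ : ℝ) (a₁ a₀ σ ρ : ℝ → ℝ) (a₁' a₀' σ' ρ' Rac : ℝ)
    (h₂ : 0 < a₂) (h₃ : 0 < a₃)
    (ha₁ : HasDerivAt a₁ a₁' Rac) (ha₀ : HasDerivAt a₀ a₀' Rac)
    (hσ : HasDerivAt σ σ' Rac) (hρ : HasDerivAt ρ ρ' Rac)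
    (hroot : ∀ Ra : ℝ,
      (a₃ : ℂ) * ((σ Ra : ℂ) + (ρ Ra : ℂ) * Complex.I) ^ 3
        + (a₂ : ℂ) * ((σ Ra : ℂ) + (ρ Ra : ℂ) * Complex.I) ^ 2
        + (a₁ Ra : ℂ) * ((σ Ra : ℂ) + (ρ Ra : ℂ) * Complex.I) + (a₀ Ra : ℂ) = 0)
    (hσc : σ Rac = 0) (hρc : ρ Rac ≠ 0)
    (hRH : a₁ Rac * a₂ = a₀ Rac * a₃) :
    σ' = (a₁ Rac * a₀' - a₀ Rac * a₁') / (2 * a₂ ^ 2 * (ρ Rac) ^ 2 + 2 * (a₁ Rac) ^ 2) ∧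
    (0 < σ' ↔ 0 < a₁ Rac * a₀' - a₀ Rac * a₁') :=
  stmt6_general a₂ a₃ a₁ a₀ σ ρ a₁' a₀' σ' ρ' Rac h₂ ha₁ ha₀ hσ hρ hroot hσc hρc
end

section
/- For the planar system dy/dt = βy + y(Γ₁y² + Γ₂z²), dz/dt = βz + z(Γ₃y² + Γ₁z²) with β > 0, Γ₁ < 0, Γ₂Γ₃ > Γ₁², Γ₁ > Γ₂, and Γ₁ > Γ₃, the Jacobian at the axis equilibrium (√(−β/Γ₁), 0) is the diagonal matrix diag(−2β, β(1 − Γ₃/Γ₁)), both of whose entries are negative; hence (√(−β/Γ₁), 0) is a hyperbolic asymptotically stable equilibrium. -/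
/-!
Since `Γ₁ s² = -β`, the Jacobian at `(s, 0)` is diagonal with negative entries. Any linearisation
`L` with `⟪v, L v⟫ ≤ -κ |v|²` makes the squared Euclidean distance `V` to the equilibrium a
strict Lyapunov function nearby: the remainder of the linearisation is `o(|v|)`, so
`V' = 2⟪q - p₀, F q⟫ ≤ -κ V` while `V` is small. A barrier argument keeps `V` small along
solutions that start close, and Grönwall's inequality then gives `V(t) ≤ V(0) e^{-κ t}`, hence
stability and attraction.
-/

/-- Jacobian of the planar vector field
`F(y,z) = (βy + Γ₁y³ + Γ₂yz², βz + Γ₃y²z + Γ₁z³)`. -/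
def Jac (β Γ₁ Γ₂ Γ₃ y z : ℝ) : Matrix (Fin 2) (Fin 2) ℝ :=
  !![β + 3 * Γ₁ * y ^ 2 + Γ₂ * z ^ 2, 2 * Γ₂ * y * z;
     2 * Γ₃ * y * z, β + Γ₃ * y ^ 2 + 3 * Γ₁ * z ^ 2]

/-- Lyapunov stability for the planar ODE `p' = F(p)`. -/
def IsStable2D (F : ℝ × ℝ → ℝ × ℝ) (p₀ : ℝ × ℝ) : Prop :=
  ∀ ε > 0, ∃ d > 0, ∀ p : ℝ → ℝ × ℝ, (∀ t, HasDerivAt p (F (p t)) t) →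
    ‖p 0 - p₀‖ < d → ∀ t ≥ 0, ‖p t - p₀‖ < ε

/-- Asymptotic stability for the planar ODE `p' = F(p)`. -/
def IsAsympStable2D (F : ℝ × ℝ → ℝ × ℝ) (p₀ : ℝ × ℝ) : Prop :=
  IsStable2D F p₀ ∧ ∃ d > 0, ∀ p : ℝ → ℝ × ℝ, (∀ t, HasDerivAt p (F (p t)) t) →
    ‖p 0 - p₀‖ < d → Filter.Tendsto p Filter.atTop (nhds p₀)

open Real Filter Topology

theorem le_of_hasDerivAt_of_level_neg {g g' : ℝ → ℝ} {R : ℝ}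
    (hg : ∀ t, HasDerivAt g (g' t) t) (hg0 : g 0 ≤ R) (hlevel : ∀ t, g t = R → g' t < 0)
    {t : ℝ} (ht : 0 ≤ t) : g t ≤ R :=
  image_le_of_deriv_right_lt_deriv_boundary' (f := g) (B := fun _ => R) (B' := fun _ => 0)
    (fun x _ => (hg x).continuousAt.continuousWithinAt) (fun x _ => (hg x).hasDerivWithinAt)
    hg0 continuousOn_const (fun _ _ => hasDerivWithinAt_const _ _ _)
    (fun x _ hx => hlevel x hx) ⟨ht, le_rfl⟩

theorem le_mul_exp_of_hasDerivAt_le_neg_mul {g g' : ℝ → ℝ} {c R : ℝ} (hc : 0 < c) (hR : 0 < R)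
    (hg : ∀ t, HasDerivAt g (g' t) t) (hg0 : g 0 ≤ R)
    (hdecay : ∀ t, g t ≤ R → g' t ≤ -c * g t) {t : ℝ} (ht : 0 ≤ t) :
    g t ≤ g 0 * exp (-c * t) := by
  have hbelow : ∀ u, 0 ≤ u → g u ≤ R := fun u hu =>
    le_of_hasDerivAt_of_level_neg hg hg0
      (fun v hv => (hdecay v hv.le).trans_lt (by rw [hv]; nlinarith)) hu
  have := le_gronwallBound_of_liminf_deriv_right_le (f := g) (f' := g') (δ := g 0) (K := -c)
    (ε := 0) (a := 0) (b := t)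
    (fun x _ => (hg x).continuousAt.continuousWithinAt)
    (fun x _ _ hr => (hg x).hasDerivWithinAt.liminf_right_slope_le hr) le_rfl
    (fun x hx => by rw [add_zero]; exact hdecay x (hbelow x hx.1)) t ⟨ht, le_rfl⟩
  rwa [gronwallBound_ε0, sub_zero] at this

/-- The Euclidean inner product on `ℝ × ℝ`, whose own norm `‖·‖` is the sup norm. -/
def euclInner (u v : ℝ × ℝ) : ℝ := u.1 * v.1 + u.2 * v.2

theorem norm_sq_le_euclInner_self (v : ℝ × ℝ) : ‖v‖ ^ 2 ≤ euclInner v v := by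
  rw [Prod.norm_def, Real.norm_eq_abs, Real.norm_eq_abs, euclInner]
  rcases le_total |v.1| |v.2| with h | h
  · rw [max_eq_right h, sq_abs]; nlinarith
  · rw [max_eq_left h, sq_abs]; nlinarith

theorem mul_fst_le_norm_mul_norm (u v : ℝ × ℝ) : u.1 * v.1 ≤ ‖u‖ * ‖v‖ :=
  calc u.1 * v.1 ≤ ‖u.1‖ * ‖v.1‖ := (Real.le_norm_self _).trans (norm_mul _ _).le
    _ ≤ ‖u‖ * ‖v‖ := mul_le_mul (norm_fst_le u) (norm_fst_le v) (norm_nonneg _) (norm_nonneg _)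

theorem mul_snd_le_norm_mul_norm (u v : ℝ × ℝ) : u.2 * v.2 ≤ ‖u‖ * ‖v‖ :=
  calc u.2 * v.2 ≤ ‖u.2‖ * ‖v.2‖ := (Real.le_norm_self _).trans (norm_mul _ _).le
    _ ≤ ‖u‖ * ‖v‖ := mul_le_mul (norm_snd_le u) (norm_snd_le v) (norm_nonneg _) (norm_nonneg _)

theorem euclInner_le_two_mul_norm_mul_norm (u v : ℝ × ℝ) : euclInner u v ≤ 2 * ‖u‖ * ‖v‖ := by
  rw [euclInner]; linarith [mul_fst_le_norm_mul_norm u v, mul_snd_le_norm_mul_norm u v]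

theorem euclInner_self_le_two_mul_norm_sq (v : ℝ × ℝ) : euclInner v v ≤ 2 * ‖v‖ ^ 2 := by
  simpa [sq, mul_assoc] using euclInner_le_two_mul_norm_mul_norm v v

theorem HasDerivAt.euclInner_sub_self {p : ℝ → ℝ × ℝ} {v p₀ : ℝ × ℝ} {t : ℝ}
    (hp : HasDerivAt p v t) :
    HasDerivAt (fun t => euclInner (p t - p₀) (p t - p₀)) (2 * euclInner (p t - p₀) v) t := by
  have h1 : HasDerivAt (fun t => (p t).1 - p₀.1) v.1 t := hp.fst.sub_const p₀.1
  have h2 : HasDerivAt (fun t => (p t).2 - p₀.2) v.2 t := hp.snd.sub_const p₀.2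
  exact ((h1.mul h1).add (h2.mul h2)).congr_deriv
    (by rw [euclInner, Prod.fst_sub, Prod.snd_sub]; ring)

section Lyapunov

variable {F : ℝ × ℝ → ℝ × ℝ} {p₀ : ℝ × ℝ} {c R : ℝ}

theorem norm_sub_le_mul_exp_of_euclInner_le (hc : 0 < c) (hR : 0 < R)
    (hF : ∀ q, euclInner (q - p₀) (q - p₀) ≤ R →
      euclInner (q - p₀) (F q) ≤ -c * euclInner (q - p₀) (q - p₀))
    {p : ℝ → ℝ × ℝ} (hp : ∀ t, HasDerivAt p (F (p t)) t) (hp0 : 2 * ‖p 0 - p₀‖ ^ 2 ≤ R)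
    {t : ℝ} (ht : 0 ≤ t) :
    ‖p t - p₀‖ ≤ 2 * ‖p 0 - p₀‖ * exp (-c * t) := by
  set g := fun t => euclInner (p t - p₀) (p t - p₀)
  have hg : g t ≤ g 0 * exp (-(2 * c) * t) :=
    le_mul_exp_of_hasDerivAt_le_neg_mul (by positivity) hR (fun t => (hp t).euclInner_sub_self)
      ((euclInner_self_le_two_mul_norm_sq _).trans hp0)
      (fun u hu => by linarith [hF (p u) hu]) ht
  rw [← pow_le_pow_iff_left₀ (norm_nonneg _) (by positivity) two_ne_zero]
  calc ‖p t - p₀‖ ^ 2 ≤ g t := norm_sq_le_euclInner_self _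
    _ ≤ 2 * ‖p 0 - p₀‖ ^ 2 * exp (-(2 * c) * t) :=
      hg.trans (mul_le_mul_of_nonneg_right (euclInner_self_le_two_mul_norm_sq _) (exp_nonneg _))
    _ ≤ (2 * ‖p 0 - p₀‖ * exp (-c * t)) ^ 2 := by
      rw [mul_pow, mul_pow, ← exp_nat_mul]
      have : ((2 : ℕ) : ℝ) * (-c * t) = -(2 * c) * t := by push_cast; ring
      rw [this]
      nlinarith [exp_pos (-(2 * c) * t), sq_nonneg ‖p 0 - p₀‖]

theorem isAsympStable2D_of_euclInner_le (hc : 0 < c) (hR : 0 < R)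
    (hF : ∀ q, euclInner (q - p₀) (q - p₀) ≤ R →
      euclInner (q - p₀) (F q) ≤ -c * euclInner (q - p₀) (q - p₀)) :
    IsAsympStable2D F p₀ := by
  have hd : 0 < √(R / 2) := by positivity
  have hstart : ∀ q : ℝ × ℝ, ‖q‖ < √(R / 2) → 2 * ‖q‖ ^ 2 ≤ R := fun q hq => by
    have := (lt_sqrt (norm_nonneg q)).1 hq
    linarith
  refine ⟨fun ε hε => ⟨min (√(R / 2)) (ε / 2), by positivity, fun p hp hp0 t ht => ?_⟩,
    √(R / 2), hd, fun p hp hp0 => ?_⟩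
  · have hp0' := lt_min_iff.1 hp0
    calc ‖p t - p₀‖ ≤ 2 * ‖p 0 - p₀‖ * exp (-c * t) :=
          norm_sub_le_mul_exp_of_euclInner_le hc hR hF hp (hstart _ hp0'.1) ht
      _ ≤ 2 * ‖p 0 - p₀‖ := mul_le_of_le_one_right (by positivity)
          (exp_le_one_iff.2 (by nlinarith))
      _ < ε := by linarith [hp0'.2]
  · have hexp : Tendsto (fun t => 2 * ‖p 0 - p₀‖ * exp (-c * t)) atTop (𝓝 0) := by
      simpa using (tendsto_exp_atBot.comp
        (tendsto_id.const_mul_atTop_of_neg (neg_lt_zero.2 hc))).const_mul (2 * ‖p 0 - p₀‖)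
    rw [tendsto_iff_norm_sub_tendsto_zero]
    refine squeeze_zero' (Eventually.of_forall fun t => norm_nonneg _) ?_ hexp
    filter_upwards [eventually_ge_atTop 0] with t ht
    exact norm_sub_le_mul_exp_of_euclInner_le hc hR hF hp (hstart _ hp0) ht

theorem exists_euclInner_le_of_hasFDerivAt {L : ℝ × ℝ →L[ℝ] ℝ × ℝ} {κ : ℝ} (hκ : 0 < κ)
    (hF0 : F p₀ = 0) (hF : HasFDerivAt F L p₀)
    (hL : ∀ v, euclInner v (L v) ≤ -κ * euclInner v v) :
    ∃ R > 0, ∀ q, euclInner (q - p₀) (q - p₀) ≤ R →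
      euclInner (q - p₀) (F q) ≤ -(κ / 2) * euclInner (q - p₀) (q - p₀) := by
  obtain ⟨δ, hδ, hsmall⟩ :=
    Metric.eventually_nhds_iff.1 (hF.isLittleO.def (c := κ / 4) (by positivity))
  refine ⟨(δ / 2) ^ 2, by positivity, fun q hq => ?_⟩
  set v := q - p₀
  have hv : ‖v‖ < δ := by
    have : ‖v‖ ≤ δ / 2 := (pow_le_pow_iff_left₀ (norm_nonneg _) (by positivity) two_ne_zero).1
      ((norm_sq_le_euclInner_self v).trans hq)
    linarith
  have hrem : ‖F q - L v‖ ≤ κ / 4 * ‖v‖ := by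
    simpa [hF0, v] using hsmall (by rwa [dist_eq_norm])
  have hsplit : euclInner v (F q) = euclInner v (L v) + euclInner v (F q - L v) := by
    simp only [euclInner, Prod.fst_sub, Prod.snd_sub]; ring
  calc euclInner v (F q) ≤ -κ * euclInner v v + 2 * ‖v‖ * (κ / 4 * ‖v‖) := by
        rw [hsplit]
        gcongr
        · exact hL v
        · exact (euclInner_le_two_mul_norm_mul_norm _ _).trans (by gcongr)
    _ ≤ -(κ / 2) * euclInner v v := by nlinarith [norm_sq_le_euclInner_self v]

theorem isAsympStable2D_of_hasFDerivAt {L : ℝ × ℝ →L[ℝ] ℝ × ℝ} {κ : ℝ} (hκ : 0 < κ)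
    (hF0 : F p₀ = 0) (hF : HasFDerivAt F L p₀)
    (hL : ∀ v, euclInner v (L v) ≤ -κ * euclInner v v) :
    IsAsympStable2D F p₀ :=
  have ⟨_, hR, hdecay⟩ := exists_euclInner_le_of_hasFDerivAt hκ hF0 hF hL
  isAsympStable2D_of_euclInner_le (by positivity) hR hdecay

end Lyapunov

def matrixToProdCLM (A : Matrix (Fin 2) (Fin 2) ℝ) : ℝ × ℝ →L[ℝ] ℝ × ℝ :=
  (A 0 0 • ContinuousLinearMap.fst ℝ ℝ ℝ + A 0 1 • ContinuousLinearMap.snd ℝ ℝ ℝ).prod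
    (A 1 0 • ContinuousLinearMap.fst ℝ ℝ ℝ + A 1 1 • ContinuousLinearMap.snd ℝ ℝ ℝ)

@[simp]
theorem matrixToProdCLM_apply (A : Matrix (Fin 2) (Fin 2) ℝ) (v : ℝ × ℝ) :
    matrixToProdCLM A v = (A 0 0 * v.1 + A 0 1 * v.2, A 1 0 * v.1 + A 1 1 * v.2) := rfl

theorem euclInner_matrixToProdCLM_diagonal_le (a b : ℝ) (v : ℝ × ℝ) :
    euclInner v (matrixToProdCLM !![a, 0; 0, b] v) ≤ -min (-a) (-b) * euclInner v v := by
  simp only [euclInner, matrixToProdCLM_apply, Matrix.of_apply, Matrix.cons_val',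
    Matrix.cons_val_zero, Matrix.cons_val_fin_one, Matrix.cons_val_one]
  nlinarith [min_le_left (-a) (-b), min_le_right (-a) (-b), mul_self_nonneg v.1,
    mul_self_nonneg v.2]

theorem isAsympStable2D_of_hasFDerivAt_diagonal {F : ℝ × ℝ → ℝ × ℝ} {p₀ : ℝ × ℝ} {a b : ℝ}
    (ha : a < 0) (hb : b < 0) (hF0 : F p₀ = 0)
    (hF : HasFDerivAt F (matrixToProdCLM !![a, 0; 0, b]) p₀) : IsAsympStable2D F p₀ :=
  isAsympStable2D_of_hasFDerivAt (lt_min (neg_pos.2 ha) (neg_pos.2 hb)) hF0 hF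
    (euclInner_matrixToProdCLM_diagonal_le a b)

theorem hasFDerivAt_field (β Γ₁ Γ₂ Γ₃ y z : ℝ) :
    HasFDerivAt (fun p : ℝ × ℝ => (β * p.1 + p.1 * (Γ₁ * p.1 ^ 2 + Γ₂ * p.2 ^ 2),
        β * p.2 + p.2 * (Γ₃ * p.1 ^ 2 + Γ₁ * p.2 ^ 2)))
      (matrixToProdCLM (Jac β Γ₁ Γ₂ Γ₃ y z)) (y, z) := by
  have hy : HasFDerivAt (fun p : ℝ × ℝ => p.1) (ContinuousLinearMap.fst ℝ ℝ ℝ) (y, z) :=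
    hasFDerivAt_fst
  have hz : HasFDerivAt (fun p : ℝ × ℝ => p.2) (ContinuousLinearMap.snd ℝ ℝ ℝ) (y, z) :=
    hasFDerivAt_snd
  have h₁ := (hy.const_mul β).add (hy.mul (((hy.pow 2).const_mul Γ₁).add ((hz.pow 2).const_mul Γ₂)))
  have h₂ := (hz.const_mul β).add (hz.mul (((hy.pow 2).const_mul Γ₃).add ((hz.pow 2).const_mul Γ₁)))
  refine (h₁.prodMk h₂).congr_fderiv ?_
  ext <;> simp [Jac] <;> ring

theorem stmt10_general (β Γ₁ Γ₂ Γ₃ : ℝ) (hβ : 0 < β) (h1 : Γ₁ < 0)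
    (h13 : Γ₃ < Γ₁) :
    let s : ℝ := Real.sqrt (-(β / Γ₁))
    let F : ℝ × ℝ → ℝ × ℝ := fun p =>
      (β * p.1 + p.1 * (Γ₁ * p.1 ^ 2 + Γ₂ * p.2 ^ 2),
       β * p.2 + p.2 * (Γ₃ * p.1 ^ 2 + Γ₁ * p.2 ^ 2))
    Jac β Γ₁ Γ₂ Γ₃ s 0 = !![-(2 * β), 0; 0, β * (1 - Γ₃ / Γ₁)] ∧
    -(2 * β) < 0 ∧ β * (1 - Γ₃ / Γ₁) < 0 ∧
    IsAsympStable2D F (s, 0) := by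
  intro s F
  have hs : Γ₁ * s ^ 2 = -β := by
    rw [sq_sqrt (neg_nonneg.2 (div_nonpos_of_nonneg_of_nonpos hβ.le h1.le)), mul_neg,
      mul_div_cancel₀ _ h1.ne]
  have hJ : Jac β Γ₁ Γ₂ Γ₃ s 0 = !![-(2 * β), 0; 0, β * (1 - Γ₃ / Γ₁)] := by
    have e₀₀ : β + 3 * Γ₁ * s ^ 2 + Γ₂ * 0 ^ 2 = -(2 * β) := by linear_combination 3 * hs
    have e₁₁ : β + Γ₃ * s ^ 2 + 3 * Γ₁ * 0 ^ 2 = β * (1 - Γ₃ / Γ₁) := by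
      field_simp [h1.ne]
      linear_combination Γ₃ * hs
    rw [Jac, e₀₀, e₁₁, mul_zero, mul_zero]
  have hμ : β * (1 - Γ₃ / Γ₁) < 0 :=
    mul_neg_of_pos_of_neg hβ (sub_neg.2 ((one_lt_div_of_neg h1).2 h13))
  have hF0 : F (s, 0) = 0 := Prod.ext (by dsimp only [F, Prod.fst_zero]; linear_combination s * hs)
    (by dsimp only [F, Prod.snd_zero]; ring)
  exact ⟨hJ, by linarith, hμ, isAsympStable2D_of_hasFDerivAt_diagonal (by linarith) hμ hF0
    (hJ ▸ hasFDerivAt_field β Γ₁ Γ₂ Γ₃ s 0)⟩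

/-- Under `β > 0`, `Γ₁ < 0`, `Γ₂Γ₃ > Γ₁²`, `Γ₁ > Γ₂`, `Γ₁ > Γ₃`, the Jacobian at the
axis equilibrium `(√(−β/Γ₁), 0)` is `diag(−2β, β(1 − Γ₃/Γ₁))`, both entries negative;
hence this equilibrium is asymptotically stable. -/
theorem stmt10 (β Γ₁ Γ₂ Γ₃ : ℝ) (hβ : 0 < β) (h1 : Γ₁ < 0)
    (h23 : Γ₁ ^ 2 < Γ₂ * Γ₃) (h12 : Γ₂ < Γ₁) (h13 : Γ₃ < Γ₁) :
    let s : ℝ := Real.sqrt (-(β / Γ₁))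
    let F : ℝ × ℝ → ℝ × ℝ := fun p =>
      (β * p.1 + p.1 * (Γ₁ * p.1 ^ 2 + Γ₂ * p.2 ^ 2),
       β * p.2 + p.2 * (Γ₃ * p.1 ^ 2 + Γ₁ * p.2 ^ 2))
    Jac β Γ₁ Γ₂ Γ₃ s 0 = !![-(2 * β), 0; 0, β * (1 - Γ₃ / Γ₁)] ∧
    -(2 * β) < 0 ∧ β * (1 - Γ₃ / Γ₁) < 0 ∧
    IsAsympStable2D F (s, 0) :=
  stmt10_general β Γ₁ Γ₂ Γ₃ hβ h1 h13
end
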